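/- arXiv:2401.09973 — 4 statements merged into one kernel-verified Lean document; each statement's English description precedes it below -/
import Mathlib

section
/- Let R be the binary relation on ℤ × ℤ defined by R (x, y) (x', y') ↔ x < 100 ∧ x' = x + 1 ∧ y' = y (the inner loop τ_{x<100} of the running example). Then for all (x, y), (x', y') ∈ ℤ × ℤ: Relation.TransGen R (x, y) (x', y') holds if and only if there exists an integer n > 0 with x + n ≤ 100, x' = x + n, and y' = y. (Correctness of the accelerated transition τ_i⁺.) -/
theorem stmt_0 :
    ∀ x y x' y' : ℤ,
      Relation.TransGen
        (fun p q : ℤ × ℤ => p.1 < 100 ∧ q.1 = p.1 + 1 ∧ q.2 = p.2)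
        (x, y) (x', y') ↔
      ∃ n : ℤ, n > 0 ∧ x + n ≤ 100 ∧ x' = x + n ∧ y' = y := by
  set R := fun p q : ℤ × ℤ => p.1 < 100 ∧ q.1 = p.1 + 1 ∧ q.2 = p.2 with hR
  have key : ∀ k : ℕ, ∀ x y : ℤ, x + (k + 1 : ℤ) ≤ 100 →
      Relation.TransGen R (x, y) (x + (k + 1 : ℤ), y) := by
    intro k
    induction k with
    | zero =>
      intro x y h
      exact Relation.TransGen.single ⟨by omega, by simp, rfl⟩
    | succ k ih =>
      intro x y h
      have h2 : Relation.TransGen R (x + 1, y) ((x + 1) + (k + 1 : ℤ), y) :=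
        ih (x + 1) y (by push_cast at h ⊢; omega)
      have step : R (x, y) (x + 1, y) := ⟨by push_cast at h; omega, rfl, rfl⟩
      have h3 := Relation.TransGen.head step h2
      convert h3 using 2
      push_cast
      ring
  have fwd : ∀ x y : ℤ, ∀ q : ℤ × ℤ, Relation.TransGen R (x, y) q →
      ∃ n : ℤ, n > 0 ∧ x + n ≤ 100 ∧ q.1 = x + n ∧ q.2 = y := by
    intro x y q h
    induction h with
    | single h => exact ⟨1, by omega, by omega, by omega, h.2.2⟩
    | tail _ step ih =>
      obtain ⟨n, hn, h1, h2, h3⟩ := ih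
      exact ⟨n + 1, by omega, by omega, by omega, by rw [step.2.2, h3]⟩
  intro x y x' y'
  constructor
  · intro h
    obtain ⟨n, hn, h1, h2, h3⟩ := fwd x y (x', y') h
    exact ⟨n, hn, h1, h2, h3⟩
  · rintro ⟨n, hn, h1, h2, h3⟩
    subst h2; subst h3
    obtain ⟨k, hk⟩ : ∃ k : ℕ, n = (k : ℤ) + 1 := ⟨(n - 1).toNat, by omega⟩
    subst hk
    exact key k x _ h1
end

section
/- Let R, A1, A2 be the binary relations on ℤ × ℤ defined by R (x, y) (x', y') ↔ (x < 100 ∧ x' = x + 1 ∧ y' = y) ∨ (x = 100 ∧ x' = 0 ∧ y' = y + 1); A1 (x, y) (x', y') ↔ ∃ n : ℤ, n > 0 ∧ x + n ≤ 100 ∧ x' = x + n ∧ y' = y; and A2 (x, y) (x', y') ↔ ∃ n : ℤ, n > 0 ∧ x = 100 ∧ 1 < x' ∧ x' ≤ 100 ∧ y' = y + n. Then there exists f : Fin 8 → ℤ × ℤ with (f 0).1 ≤ 0, (f 0).2 ≤ 0, (f (Fin.last 7)).2 ≥ 100, and for every i : Fin 7, R (f i.castSucc) (f i.succ) ∨ A1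 (f i.castSucc) (f i.succ) ∨ A2 (f i.castSucc) (f i.succ). (With the accelerated transitions, ABMC proves unsafety of the running example with bound 7.) -/
def tauR : ℤ × ℤ → ℤ × ℤ → Prop := fun p q =>
  (p.1 < 100 ∧ q.1 = p.1 + 1 ∧ q.2 = p.2) ∨
  (p.1 = 100 ∧ q.1 = 0 ∧ q.2 = p.2 + 1)

def accel1 : ℤ × ℤ → ℤ × ℤ → Prop := fun p q =>
  ∃ n : ℤ, n > 0 ∧ p.1 + n ≤ 100 ∧ q.1 = p.1 + n ∧ q.2 = p.2

def accel2 : ℤ × ℤ → ℤ × ℤ → Prop := fun p q =>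
  ∃ n : ℤ, n > 0 ∧ p.1 = 100 ∧ 1 < q.1 ∧ q.1 ≤ 100 ∧ q.2 = p.2 + n

def traceF : Fin 8 → ℤ × ℤ := fun i =>
  match i.val with
  | 0 => (0,0) | 1 => (100,0) | 2 => (0,1) | 3 => (100,1)
  | 4 => (100,100) | 5 => (0,101) | 6 => (1,101) | _ => (2,101)

theorem stmt_3 :
    ∃ f : Fin 8 → ℤ × ℤ,
      (f 0).1 ≤ 0 ∧ (f 0).2 ≤ 0 ∧ (f (Fin.last 7)).2 ≥ 100 ∧
      ∀ i : Fin 7,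
        tauR (f i.castSucc) (f i.succ) ∨
        accel1 (f i.castSucc) (f i.succ) ∨
        accel2 (f i.castSucc) (f i.succ) := by
  refine ⟨traceF, by norm_num [traceF], by norm_num [traceF], by norm_num [traceF, Fin.last], ?_⟩
  intro i
  fin_cases i
  · exact Or.inr (Or.inl ⟨100, by norm_num [traceF]⟩)
  · exact Or.inl (Or.inr (by norm_num [traceF]))
  · exact Or.inr (Or.inl ⟨100, by norm_num [traceF]⟩)
  · exact Or.inr (Or.inr ⟨99, by norm_num [traceF]⟩)
  · exact Or.inl (Or.inr (by norm_num [traceF]))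
  · exact Or.inl (Or.inl (by norm_num [traceF]))
  · exact Or.inl (Or.inl (by norm_num [traceF]))
end

section
/- Let P₁ and P₂ be binary relations on a type α, let P be their composition (P a b ↔ ∃ c, P₁ a c ∧ P₂ c b), let L = Relation.TransGen P, and define S a b ↔ ∃ c d, P₂ a c ∧ L c d ∧ P₁ d b. Then S is transitive and Relation.TransGen S = S. (Accelerating any conjugate π₂ :: accel(π) :: π₁ of a cycle π = π₁ :: π₂ followed by its acceleration is pointless, since the composed relation equals its own transitive closure.) -/
/-!
In `a P₂ c L d P₁ b P₂ c' L d' P₁ e` the middle `d P₁ b P₂ c'` is one `P`-step, so the two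
`L`-segments fuse into the single segment `c L d'`.
-/

open Relation

local infixr:80 " ∘r " => Relation.Comp

instance Relation.isTrans_comp_transGen_comp {α : Type*} (P₁ P₂ : α → α → Prop) :
    IsTrans α (P₂ ∘r TransGen (P₁ ∘r P₂) ∘r P₁) where
  trans := by
    rintro a b e ⟨c, hac, d, hcd, hdb⟩ ⟨c', hbc', d', hc'd', hd'e⟩
    exact ⟨c, hac, d', hcd.trans (.head ⟨b, hdb, hbc'⟩ hc'd'), hd'e⟩

theorem stmt_6 {α : Type*} (P₁ P₂ : α → α → Prop)
    (P : α → α → Prop) (hP : ∀ a b, P a b ↔ ∃ c, P₁ a c ∧ P₂ c b)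
    (L : α → α → Prop) (hL : L = Relation.TransGen P)
    (S : α → α → Prop)
    (hS : ∀ a b, S a b ↔ ∃ c d, P₂ a c ∧ L c d ∧ P₁ d b) :
    Transitive S ∧ Relation.TransGen S = S := by
  have hP' : P = P₁ ∘r P₂ := funext₂ fun a b => propext (hP a b)
  have hS' : S = P₂ ∘r L ∘r P₁ := by
    funext a b
    simp only [hS, Relation.Comp, exists_and_left]
  subst hS' hL hP'
  exact ⟨fun _ _ _ => _root_.trans, transGen_eq_self⟩
end

section
/- Let R be a binary relation on a type α and init, err : α → Prop, and let b ∈ ℕ. Suppose (i) there is no f : Fin (b + 1) → α with init (f 0) and R (f i.castSucc) (f i.succ) for all i : Fin b (no run of length b from an initial state), and (ii) for every k < b there is no f : Fin (k + 1) → α with init (f 0), R (f i.castSucc) (f i.succ) for all i : Fin k, and err (f (Fin.last k)) (no counterexample of length < b). Then for all s, t ∈ α with init s and Relation.ReflTransGen R s t, err t does not hold. (Soundness of BMC's 'safe' answer: if the unrolling of length b is unsatisfiable and no error state was found at smaller bounds, the safety problem is safe.) -/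
namespace Relation

variable {α : Type*} {R : α → α → Prop}

def IsRun {n : ℕ} (R : α → α → Prop) (f : Fin (n + 1) → α) : Prop :=
  ∀ i : Fin n, R (f i.castSucc) (f i.succ)

theorem IsRun.cons {n : ℕ} {f : Fin (n + 1) → α} {x : α} (hf : IsRun R f) (hx : R x (f 0)) :
    IsRun R (Fin.cons x f : Fin (n + 2) → α) := by
  intro i
  cases i using Fin.cases with
  | zero => simpa using hx
  | succ j => simpa [← Fin.succ_castSucc] using hf j

theorem IsRun.castLE {m n : ℕ} {f : Fin (n + 1) → α} (hf : IsRun R f) (hmn : m ≤ n) :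
    IsRun R (f ∘ Fin.castLE (Nat.succ_le_succ hmn)) := fun i =>
  hf (i.castLE hmn)

theorem ReflTransGen.exists_isRun {s t : α} (h : ReflTransGen R s t) :
    ∃ n, ∃ f : Fin (n + 1) → α, f 0 = s ∧ f (Fin.last n) = t ∧ IsRun R f := by
  induction h using ReflTransGen.head_induction_on with
  | refl => exact ⟨0, fun _ => t, rfl, rfl, fun i => i.elim0⟩
  | head hxy _ ih =>
    obtain ⟨n, f, rfl, rfl, hf⟩ := ih
    exact ⟨n + 1, Fin.cons _ f, rfl, by simp [← Fin.succ_last], hf.cons hxy⟩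

end Relation

theorem stmt_10 {α : Type*} (R : α → α → Prop) (init err : α → Prop) (b : ℕ)
    (h₁ : ¬ ∃ f : Fin (b + 1) → α,
      init (f 0) ∧ ∀ i : Fin b, R (f i.castSucc) (f i.succ))
    (h₂ : ∀ k < b, ¬ ∃ f : Fin (k + 1) → α,
      init (f 0) ∧ (∀ i : Fin k, R (f i.castSucc) (f i.succ)) ∧
      err (f (Fin.last k))) :
    ∀ s t : α, init s → Relation.ReflTransGen R s t → ¬ err t := by
  rintro s t hs hst het
  obtain ⟨n, f, rfl, rfl, hf⟩ := hst.exists_isRun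
  rcases lt_or_ge n b with hn | hbn
  · exact h₂ n hn ⟨f, hs, hf, het⟩
  · exact h₁ ⟨_, hs, hf.castLE hbn⟩
end
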